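/- arXiv:1003.0445 — 4 statements merged into one kernel-verified Lean document; each statement's English description precedes it below -/
import Mathlib

section
/- Let K ≥ 2, let s ∈ ℝ^K be a nonzero vector, and let G be a K × (K−1) real matrix whose K−1 columns form an orthonormal basis of the orthogonal complement of span{s} in ℝ^K. Then for every K × m real matrix S, the rank of the K × (m+1) matrix [S | s] obtained by appending the column s to S satisfies rank([S | s]) = 1 + rank(Gᵀ · S). -/
open Matrix

/-- If `s ∈ ℝ^K` is nonzero and the columns of the `K × (K-1)` matrix `G` form an
orthonormal basis of the orthogonal complement of `span {s}`, then for every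
`K × m` matrix `S`, `rank [S | s] = 1 + rank (Gᵀ * S)`. -/
theorem stmt3 (K : ℕ) (hK : 2 ≤ K) (s : Fin K → ℝ) (hs : s ≠ 0)
    (G : Matrix (Fin K) (Fin (K - 1)) ℝ)
    (hGon : Orthonormal ℝ (fun j : Fin (K - 1) =>
      ((WithLp.equiv 2 (Fin K → ℝ)).symm (fun i => G i j) : EuclideanSpace ℝ (Fin K))))
    (hGspan : Submodule.span ℝ
        (Set.range (fun j : Fin (K - 1) =>
          ((WithLp.equiv 2 (Fin K → ℝ)).symm (fun i => G i j) : EuclideanSpace ℝ (Fin K))))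
      = (Submodule.span ℝ
          {((WithLp.equiv 2 (Fin K → ℝ)).symm s : EuclideanSpace ℝ (Fin K))})ᗮ)
    (m : ℕ) (S : Matrix (Fin K) (Fin m) ℝ) :
    (Matrix.of (fun i : Fin K => Fin.snoc (fun k : Fin m => S i k) (s i))).rank
      = 1 + (G.transpose * S).rank := by
  classical
  set g : Fin (K-1) → EuclideanSpace ℝ (Fin K) :=
    fun j => (WithLp.equiv 2 (Fin K → ℝ)).symm (fun i => G i j) with hg
  set sv : EuclideanSpace ℝ (Fin K) := (WithLp.equiv 2 (Fin K → ℝ)).symm s with hsv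
  -- columns of G are orthogonal to s
  have hGs : Gᵀ.mulVec s = 0 := by
    funext j
    have hmem : g j ∈ (Submodule.span ℝ {sv})ᗮ := by
      rw [← hGspan]; exact Submodule.subset_span ⟨j, rfl⟩
    have h0 := hmem sv (Submodule.mem_span_singleton_self sv)
    simpa [hg, hsv, PiLp.inner_apply, RCLike.inner_apply, WithLp.equiv_symm_apply,
      Matrix.mulVec, dotProduct, Matrix.transpose_apply, mul_comm] using h0
  -- GᵀG = 1
  have hGtG : Gᵀ * G = 1 := by
    ext j k
    have h0 := orthonormal_iff_ite.mp hGon j k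
    simpa [hg, PiLp.inner_apply, RCLike.inner_apply, WithLp.equiv_symm_apply,
      Matrix.mul_apply, Matrix.one_apply, Matrix.transpose_apply, mul_comm] using h0
  -- decomposition of an arbitrary vector
  have hdecomp : ∀ x : Fin K → ℝ, ∃ (c : ℝ) (a : Fin (K-1) → ℝ), x = c • s + G.mulVec a := by
    intro x
    have htop : ((WithLp.equiv 2 (Fin K → ℝ)).symm x : EuclideanSpace ℝ (Fin K)) ∈
        (Submodule.span ℝ {sv}) ⊔ (Submodule.span ℝ {sv})ᗮ := by
      rw [Submodule.sup_orthogonal_of_hasOrthogonalProjection]; trivial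
    rw [← hGspan] at htop
    obtain ⟨y, hy, z, hz, hyz⟩ := Submodule.mem_sup.mp htop
    obtain ⟨c, rfl⟩ := Submodule.mem_span_singleton.mp hy
    obtain ⟨a, ha⟩ := (Submodule.mem_span_range_iff_exists_fun ℝ).mp hz
    refine ⟨c, a, ?_⟩
    have hx : (c • sv + ∑ j, a j • g j : EuclideanSpace ℝ (Fin K))
        = (WithLp.equiv 2 (Fin K → ℝ)).symm x := by rw [ha, hyz]
    have hxx := congrArg (WithLp.linearEquiv 2 ℝ (Fin K → ℝ)) hx
    simp only [map_add, _root_.map_smul, map_sum, WithLp.linearEquiv_apply, hg, hsv,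
      Equiv.apply_symm_apply, AddEquiv.toFun_eq_coe, WithLp.coe_addEquiv,
      WithLp.equiv_symm_apply, WithLp.ofLp_toLp] at hxx
    rw [← hxx]
    congr 1
    funext i
    simp [Matrix.mulVec, dotProduct, Finset.sum_apply, mul_comm]
  -- projection matrix
  set P : Matrix (Fin K) (Fin K) ℝ := G * Gᵀ with hP
  have key2 : ∀ x : Fin K → ℝ, x - P.mulVec x ∈ Submodule.span ℝ {s} := by
    intro x
    obtain ⟨c, a, rfl⟩ := hdecomp x
    have : P.mulVec (c • s + G.mulVec a) = G.mulVec a := by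
      rw [hP, Matrix.mulVec_add, Matrix.mulVec_smul, ← Matrix.mulVec_mulVec, hGs,
        Matrix.mulVec_zero, smul_zero, zero_add, ← Matrix.mulVec_mulVec,
        Matrix.mulVec_mulVec a Gᵀ G, hGtG, Matrix.one_mulVec]
    rw [this]
    simp only [add_sub_cancel_right]
    exact Submodule.smul_mem _ c (Submodule.mem_span_singleton_self s)
  have key3 : ∀ x : Fin K → ℝ, s ⬝ᵥ P.mulVec x = 0 := by
    intro x
    rw [Matrix.dotProduct_mulVec, hP, ← Matrix.vecMul_vecMul]
    have : Matrix.vecMul s G = 0 := by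
      funext j
      have := congrFun hGs j
      simpa [Matrix.vecMul, Matrix.mulVec, dotProduct, Matrix.transpose_apply,
        mul_comm] using this
    rw [this, Matrix.zero_vecMul, zero_dotProduct]
  -- rank (Gᵀ S) = rank (P S)
  have hrankPS : (P * S).rank = (Gᵀ * S).rank := by
    have h1 : Gᵀ * (P * S) = Gᵀ * S := by
      rw [hP, ← Matrix.mul_assoc, ← Matrix.mul_assoc, hGtG, Matrix.one_mul]
    refine le_antisymm ?_ ?_
    · rw [hP, Matrix.mul_assoc]
      exact Matrix.rank_mul_le_right _ _
    · conv_lhs => rw [← h1]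
      exact Matrix.rank_mul_le_right _ _
  -- column space description of the big matrix
  set A : Matrix (Fin K) (Fin (m+1)) ℝ :=
    Matrix.of (fun i : Fin K => Fin.snoc (fun k : Fin m => S i k) (s i)) with hA
  have hlast : Aᵀ (Fin.last m) = s := by
    funext i
    simp [hA, Matrix.transpose_apply, Fin.snoc_last]
  have hcast : ∀ j : Fin m, Aᵀ (Fin.castSucc j) = Sᵀ j := by
    intro j
    funext i
    simp [hA, Matrix.transpose_apply, Fin.snoc_castSucc]
  have hAT : Set.range Aᵀ = insert s (Set.range Sᵀ) := by
    ext v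
    constructor
    · rintro ⟨k, rfl⟩
      refine Fin.lastCases ?_ (fun j => ?_) k
      · exact Set.mem_insert_iff.mpr (Or.inl hlast)
      · exact Set.mem_insert_iff.mpr (Or.inr ⟨j, (hcast j).symm⟩)
    · rintro (rfl | ⟨j, rfl⟩)
      · exact ⟨Fin.last m, hlast⟩
      · exact ⟨Fin.castSucc j, hcast j⟩
  set U : Submodule ℝ (Fin K → ℝ) := LinearMap.range S.mulVecLin with hU
  have hUspan : U = Submodule.span ℝ (Set.range Sᵀ) := Matrix.range_mulVecLin S
  -- the span equality
  have hsup : Submodule.span ℝ {s} ⊔ U = Submodule.span ℝ {s} ⊔ U.map P.mulVecLin := by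
    refine le_antisymm (sup_le le_sup_left ?_) (sup_le le_sup_left ?_)
    · intro x hx
      have : x = (x - P.mulVec x) + P.mulVec x := by ring_nf
      rw [this]
      exact Submodule.add_mem _ (Submodule.mem_sup_left (key2 x))
        (Submodule.mem_sup_right ⟨x, hx, rfl⟩)
    · rintro _ ⟨x, hx, rfl⟩
      have : P.mulVecLin x = x - (x - P.mulVec x) := by
        simp [Matrix.mulVecLin_apply]
      rw [this]
      exact Submodule.sub_mem _ (Submodule.mem_sup_right hx)
        (Submodule.mem_sup_left (key2 x))
  have hinf : Submodule.span ℝ {s} ⊓ U.map P.mulVecLin = ⊥ := by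
    rw [Submodule.eq_bot_iff]
    rintro v ⟨hv1, hv2⟩
    obtain ⟨c, rfl⟩ := Submodule.mem_span_singleton.mp hv1
    obtain ⟨x, _, hx⟩ := hv2
    have h0 : s ⬝ᵥ (c • s) = 0 := by
      rw [← hx]
      exact key3 x
    rw [dotProduct_smul, smul_eq_mul] at h0
    rcases mul_eq_zero.mp h0 with hc | hss
    · rw [hc, zero_smul]
    · exact absurd (dotProduct_self_eq_zero.mp hss) hs
  -- put it together
  have hrankA : A.rank = Module.finrank ℝ ↥(Submodule.span ℝ {s} ⊔ U) := by
    rw [Matrix.rank_eq_finrank_span_cols, Matrix.col, hAT, Set.insert_eq, Submodule.span_union, ← hUspan]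
  have hrankPS' : (P * S).rank = Module.finrank ℝ (U.map P.mulVecLin) := by
    rw [Matrix.rank, Matrix.mulVecLin_mul, LinearMap.range_comp]
  have hfin := Submodule.finrank_sup_add_finrank_inf_eq
    (Submodule.span ℝ {s}) (U.map P.mulVecLin)
  rw [hinf, finrank_bot, add_zero, finrank_span_singleton hs] at hfin
  rw [hrankA, hsup, hfin, ← hrankPS, hrankPS']
end

section
/- Let K ≥ 1, ε ∈ [0, 1] with ε̄ = 1−ε, and p₁, p₋₁ ∈ [0, 1] with p₁ + p₋₁ = 1. Let s₁ and s₂ be independent random vectors in {−1, 0, 1}^K whose coordinates are i.i.d., each coordinate taking the value 0 with probability ε̄, the value 1 with probability ε·p₁, and the value −1 with probability ε·p₋₁. Then the probability that s₁ does not belong to the ℝ-linear span of {s₂} in ℝ^K equals 1 − ε̄^K + 2ε̄^{2K} − (ε̄² + ε²(p₁² + p₋₁²))^K − (ε̄² + 2ε²p₁p₋₁)^K. -/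
open MeasureTheory ProbabilityTheory

lemma aux_span (K : ℕ) (v w : Fin K → ℝ)
    (hv : ∀ i, v i ∈ ({-1, 0, 1} : Set ℝ)) (hw : ∀ i, w i ∈ ({-1, 0, 1} : Set ℝ)) :
    v ∈ Submodule.span ℝ {w} ↔ v = 0 ∨ v = w ∨ v = -w := by
  rw [Submodule.mem_span_singleton]
  constructor
  · rintro ⟨c, hc⟩
    by_cases hv0 : v = 0
    · exact Or.inl hv0
    · have ⟨i, hi⟩ : ∃ i, v i ≠ 0 := by
        by_contra h
        push_neg at h
        exact hv0 (funext h)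
      have hci : c * w i = v i := by
        have := congrFun hc i
        simpa using this
      have hwi : w i ≠ 0 := by
        intro h; rw [h, mul_zero] at hci; exact hi hci.symm
      have hc1 : c = 1 ∨ c = -1 := by
        rcases hv i with h1 | h1 | h1 <;> rcases hw i with h2 | h2 | h2 <;>
          (try simp only [Set.mem_singleton_iff] at *) <;>
          first
            | (exact absurd h1 hi)
            | (exact absurd h2 hwi)
            | (rw [h1, h2] at hci; left; linarith)
            | (rw [h1, h2] at hci; right; linarith)
      rcases hc1 with h | h
      · right; left
        funext j
        have := congrFun hc j
        simp [h] at this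
        exact this.symm
      · right; right
        funext j
        have := congrFun hc j
        simp [h] at this
        simpa using this.symm
  · rintro (h | h | h)
    · exact ⟨0, by simp [h]⟩
    · exact ⟨1, by simp [h]⟩
    · exact ⟨-1, by simp [h]⟩

lemma aux_sum (K : ℕ) (h : Fin 3 → ENNReal) :
    ∑ v : Fin K → Fin 3, ∏ i : Fin K, h (v i) = (∑ j : Fin 3, h j) ^ K := by
  rw [show (Finset.univ : Finset (Fin K → Fin 3)) = Fintype.piFinset fun _ => Finset.univ from
    Fintype.piFinset_univ.symm, ← Finset.prod_univ_sum]
  simp [Finset.prod_const]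

/-- Let `s₁, s₂` be independent random signature codes of length `K`: all `2K` coordinates
are independent, each equal to `0` w.p. `1-ε`, `1` w.p. `ε·p1`, `-1` w.p. `ε·pm1`. Then
the probability that `s₁ ∉ span ℝ {s₂}` equals
`1 - (1-ε)^K + 2(1-ε)^{2K} - ((1-ε)² + ε²(p1² + pm1²))^K - ((1-ε)² + 2ε²·p1·pm1)^K`. -/
theorem stmt9 {Ω : Type*} [MeasurableSpace Ω] (μ : Measure Ω) [IsProbabilityMeasure μ]
    (K : ℕ) (hK : 1 ≤ K) (ε p1 pm1 : ℝ) (hε : ε ∈ Set.Icc (0 : ℝ) 1)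
    (hp1 : p1 ∈ Set.Icc (0 : ℝ) 1) (hpm1 : pm1 ∈ Set.Icc (0 : ℝ) 1)
    (hp : p1 + pm1 = 1)
    (s : Fin 2 → Ω → (Fin K → ℝ))
    (hmeas : ∀ a, Measurable (s a))
    (hindep : iIndepFun
      (fun (q : Fin 2 × Fin K) (ω : Ω) => s q.1 ω q.2) μ)
    (hval : ∀ a ω i, s a ω i ∈ ({-1, 0, 1} : Set ℝ))
    (h0 : ∀ a i, μ {ω | s a ω i = 0} = ENNReal.ofReal (1 - ε))
    (h1 : ∀ a i, μ {ω | s a ω i = 1} = ENNReal.ofReal (ε * p1))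
    (hm1 : ∀ a i, μ {ω | s a ω i = -1} = ENNReal.ofReal (ε * pm1)) :
    μ {ω | s 0 ω ∉ Submodule.span ℝ {s 1 ω}}
      = ENNReal.ofReal
          (1 - (1 - ε) ^ K + 2 * (1 - ε) ^ (2 * K)
            - ((1 - ε) ^ 2 + ε ^ 2 * (p1 ^ 2 + pm1 ^ 2)) ^ K
            - ((1 - ε) ^ 2 + 2 * ε ^ 2 * p1 * pm1) ^ K) := by
  obtain ⟨hε0, hε1⟩ := hε
  obtain ⟨hq0, hq1⟩ := hp1
  obtain ⟨hr0, hr1⟩ := hpm1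
  have heb0 : (0:ℝ) ≤ 1 - ε := by linarith
  have heb1 : (1:ℝ) - ε ≤ 1 := by linarith
  -- coordinate measurability
  have hm : ∀ (a : Fin 2) (i : Fin K), Measurable fun ω => s a ω i :=
    fun a i => (measurable_pi_apply i).comp (hmeas a)
  -- key product formula
  have hkey : ∀ (B : Fin 2 × Fin K → Set ℝ), (∀ q, MeasurableSet (B q)) →
      μ (⋂ q : Fin 2 × Fin K, (fun ω => s q.1 ω q.2) ⁻¹' B q)
        = ∏ q : Fin 2 × Fin K, μ ((fun ω => s q.1 ω q.2) ⁻¹' B q) :=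
    fun B hB => hindep.meas_iInter (fun q => ⟨B q, hB q, rfl⟩)
  -- value encoding
  set val : Fin 3 → ℝ := ![-1, 0, 1] with hval_def
  set P : Fin 3 → ℝ := ![ε * pm1, 1 - ε, ε * p1] with hP_def
  have hP0 : ∀ j, 0 ≤ P j := by
    intro j
    fin_cases j <;> simp [hP_def] <;> [exact mul_nonneg hε0 hr0; linarith; exact mul_nonneg hε0 hq0]
  have hvalinj : Function.Injective val := by
    intro j k h
    fin_cases j <;> fin_cases k <;> first | rfl | (exfalso; norm_num [hval_def] at h)
  have hPm : ∀ (a : Fin 2) (i : Fin K) (j : Fin 3),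
      μ ((fun ω => s a ω i) ⁻¹' {val j}) = ENNReal.ofReal (P j) := by
    intro a i j
    have hpre : ∀ (x : ℝ), ((fun ω => s a ω i) ⁻¹' {x}) = {ω | s a ω i = x} := by
      intro x; rfl
    fin_cases j <;> simp only [hval_def, hP_def, Matrix.cons_val_zero, Matrix.cons_val_one,
      Matrix.head_cons, Matrix.cons_val_two, Matrix.tail_cons, hpre]
    · exact hm1 a i
    · exact h0 a i
    · exact h1 a i
  -- the four basic sets
  set SA : Set Ω := {ω | s 0 ω = 0} with hSA_def
  set SB : Set Ω := {ω | s 0 ω = s 1 ω} with hSB_def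
  set SC : Set Ω := {ω | s 0 ω = - s 1 ω} with hSC_def
  set SD : Set Ω := {ω | s 0 ω = 0 ∧ s 1 ω = 0} with hSD_def
  have hSAm : MeasurableSet SA := hmeas 0 (measurableSet_singleton 0)
  have hSBm : MeasurableSet SB := measurableSet_eq_fun (hmeas 0) (hmeas 1)
  have hSCm : MeasurableSet SC := measurableSet_eq_fun (hmeas 0) (hmeas 1).neg
  -- real constants
  set A' : ℝ := (1 - ε) ^ 2 + ε ^ 2 * (p1 ^ 2 + pm1 ^ 2) with hA'_def
  set B' : ℝ := (1 - ε) ^ 2 + 2 * ε ^ 2 * p1 * pm1 with hB'_def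
  have hA'0 : 0 ≤ A' := by positivity
  have hB'0 : 0 ≤ B' := by positivity
  -- general lemma for "matching"-type events
  have main : ∀ (T : ℝ → ℝ) (f : Fin 3 → Fin 3), (∀ j, T (val j) = val (f j)) →
      μ {ω | ∀ i, s 1 ω i = T (s 0 ω i)}
        = (∑ j : Fin 3, ENNReal.ofReal (P j) * ENNReal.ofReal (P (f j))) ^ K := by
    intro T f hT
    set F : (Fin K → Fin 3) → Set Ω := fun v =>
      ⋂ q : Fin 2 × Fin K, (fun ω => s q.1 ω q.2) ⁻¹'
        (if q.1 = 0 then ({val (v q.2)} : Set ℝ) else {val (f (v q.2))}) with hF_def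
    have hcov : {ω | ∀ i, s 1 ω i = T (s 0 ω i)}
        = ⋃ v ∈ (Finset.univ : Finset (Fin K → Fin 3)), F v := by
      ext ω
      simp only [Set.mem_setOf_eq, Finset.mem_univ, Set.iUnion_true, Set.mem_iUnion,
        hF_def, Set.mem_iInter, Set.mem_preimage]
      constructor
      · intro h
        refine ⟨fun i => if s 0 ω i = -1 then 0 else if s 0 ω i = 0 then 1 else 2, ?_⟩
        rintro ⟨a, i⟩
        have hv0 : s 0 ω i = val (if s 0 ω i = -1 then (0:Fin 3) else
            if s 0 ω i = 0 then 1 else 2) := by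
          rcases hval 0 ω i with h' | h' | h' <;> rw [h'] <;> norm_num [hval_def, Matrix.cons_val_two, Matrix.tail_cons, Matrix.head_cons]
        fin_cases a
        · simpa using hv0
        · simp only [Fin.mk_one]
          rw [if_neg (show ¬((1:Fin 2) = 0) by norm_num), Set.mem_singleton_iff, h i]
          conv_lhs => rw [hv0]
          exact hT _
      · rintro ⟨v, hv⟩ i
        have h0' := hv (0, i)
        have h1' := hv (1, i)
        simp only [if_pos rfl] at h0'
        rw [if_neg (by norm_num)] at h1'
        rw [h0', h1', hT]
    have hFm : ∀ v ∈ (Finset.univ : Finset (Fin K → Fin 3)), MeasurableSet (F v) := by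
      intro v _
      exact MeasurableSet.iInter fun q => (hm q.1 q.2) (by split <;> exact measurableSet_singleton _)
    have hdisj : Set.PairwiseDisjoint (↑(Finset.univ : Finset (Fin K → Fin 3))) F := by
      intro v _ w _ hvw
      rw [Function.onFun, Set.disjoint_left]
      intro ω hωv hωw
      apply hvw
      funext i
      have hv' := Set.mem_iInter.1 hωv (0, i)
      have hw' := Set.mem_iInter.1 hωw (0, i)
      simp only [Set.mem_preimage, if_pos rfl, Set.mem_singleton_iff] at hv' hw'
      exact hvalinj (hv'.symm.trans hw')
    rw [hcov, measure_biUnion_finset hdisj hFm]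
    have hFv : ∀ v : Fin K → Fin 3,
        μ (F v) = ∏ i : Fin K, (ENNReal.ofReal (P (v i)) * ENNReal.ofReal (P (f (v i)))) := by
      intro v
      rw [hF_def]
      rw [hkey _ (fun q => by split <;> exact measurableSet_singleton _)]
      rw [Fintype.prod_prod_type]
      rw [Fin.prod_univ_two]
      simp only [reduceIte, if_neg (show (1:Fin 2) ≠ 0 by norm_num)]
      have e0 : ∀ i : Fin K, μ ((fun ω => s 0 ω i) ⁻¹' {val (v i)})
          = ENNReal.ofReal (P (v i)) := fun i => hPm 0 i (v i)
      have e1 : ∀ i : Fin K, μ ((fun ω => s 1 ω i) ⁻¹' {val (f (v i))})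
          = ENNReal.ofReal (P (f (v i))) := fun i => hPm 1 i (f (v i))
      simp only [e0, e1]
      rw [← Finset.prod_mul_distrib]
    simp only [hFv]
    exact aux_sum K fun j => ENNReal.ofReal (P j) * ENNReal.ofReal (P (f j))
  -- compute μ SB
  have hB : μ SB = ENNReal.ofReal A' ^ K := by
    have hset : SB = {ω | ∀ i, s 1 ω i = id (s 0 ω i)} := by
      ext ω
      simp only [hSB_def, Set.mem_setOf_eq, id_eq, funext_iff]
      exact ⟨fun h i => (h i).symm, fun h i => (h i).symm⟩
    rw [hset, main id id (fun j => rfl)]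
    congr 1
    rw [Fin.sum_univ_three]
    simp only [← ENNReal.ofReal_mul (hP0 _), ← ENNReal.ofReal_add (mul_nonneg (hP0 _) (hP0 _))
      (mul_nonneg (hP0 _) (hP0 _)), ← ENNReal.ofReal_add (add_nonneg (mul_nonneg (hP0 _) (hP0 _))
      (mul_nonneg (hP0 _) (hP0 _))) (mul_nonneg (hP0 _) (hP0 _))]
    congr 1
    simp only [hP_def, hA'_def, Matrix.cons_val_zero, Matrix.cons_val_one, Matrix.head_cons,
      Matrix.cons_val_two, Matrix.tail_cons, id_eq]
    all_goals ring
  -- compute μ SC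
  have hC : μ SC = ENNReal.ofReal B' ^ K := by
    have hset : SC = {ω | ∀ i, s 1 ω i = Neg.neg (s 0 ω i)} := by
      ext ω
      simp only [hSC_def, Set.mem_setOf_eq, funext_iff]
      constructor
      · intro h i; have := h i; simp only [Pi.neg_apply] at this; linarith
      · intro h i; simp only [Pi.neg_apply]; linarith [h i]
    rw [hset, main Neg.neg ![2, 1, 0] (fun j => by fin_cases j <;> norm_num [hval_def, Matrix.cons_val_two, Matrix.tail_cons, Matrix.head_cons])]
    congr 1
    rw [Fin.sum_univ_three]
    simp only [← ENNReal.ofReal_mul (hP0 _), ← ENNReal.ofReal_add (mul_nonneg (hP0 _) (hP0 _))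
      (mul_nonneg (hP0 _) (hP0 _)), ← ENNReal.ofReal_add (add_nonneg (mul_nonneg (hP0 _) (hP0 _))
      (mul_nonneg (hP0 _) (hP0 _))) (mul_nonneg (hP0 _) (hP0 _))]
    congr 1
    simp only [hP_def, hB'_def, Matrix.cons_val_zero, Matrix.cons_val_one, Matrix.head_cons,
      Matrix.cons_val_two, Matrix.tail_cons]
    all_goals ring
  -- compute μ SA
  have hA : μ SA = ENNReal.ofReal (1 - ε) ^ K := by
    have hset : SA = ⋂ q : Fin 2 × Fin K, (fun ω => s q.1 ω q.2) ⁻¹'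
        (if q.1 = 0 then ({0} : Set ℝ) else Set.univ) := by
      ext ω
      simp only [hSA_def, Set.mem_setOf_eq, Set.mem_iInter, Set.mem_preimage, funext_iff]
      constructor
      · rintro h ⟨a, i⟩
        fin_cases a
        · simpa using h i
        · norm_num
      · intro h i
        have := h (0, i)
        simpa using this
    rw [hset, hkey _ (fun q => by split <;> [exact measurableSet_singleton _; exact MeasurableSet.univ])]
    rw [Fintype.prod_prod_type, Fin.prod_univ_two]
    simp only [reduceIte, if_neg (show (1:Fin 2) ≠ 0 by norm_num)]
    have e0 : ∀ i : Fin K, μ ((fun ω => s 0 ω i) ⁻¹' ({0} : Set ℝ))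
        = ENNReal.ofReal (1 - ε) := fun i => h0 0 i
    have e1 : ∀ i : Fin K, μ ((fun ω => s 1 ω i) ⁻¹' (Set.univ : Set ℝ)) = 1 := by
      intro i; simp
    simp [e0, e1, Finset.prod_const]
  -- compute μ SD
  have hD : μ SD = ENNReal.ofReal (1 - ε) ^ (2 * K) := by
    have hset : SD = ⋂ q : Fin 2 × Fin K, (fun ω => s q.1 ω q.2) ⁻¹' ({0} : Set ℝ) := by
      ext ω
      simp only [hSD_def, Set.mem_setOf_eq, Set.mem_iInter, Set.mem_preimage, funext_iff]
      constructor
      · rintro ⟨ha, hb⟩ ⟨a, i⟩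
        fin_cases a
        · simpa using ha i
        · simpa using hb i
      · intro h
        exact ⟨fun i => by simpa using h (0, i), fun i => by simpa using h (1, i)⟩
    rw [hset, hkey _ (fun q => measurableSet_singleton _)]
    have e : ∀ q : Fin 2 × Fin K, μ ((fun ω => s q.1 ω q.2) ⁻¹' ({0} : Set ℝ))
        = ENNReal.ofReal (1 - ε) := fun q => h0 q.1 q.2
    simp [e, Finset.prod_const, two_mul, pow_add]
  -- set identities
  have hBC : SB ∩ SC = SD := by
    ext ω
    simp only [hSB_def, hSC_def, hSD_def, Set.mem_inter_iff, Set.mem_setOf_eq]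
    constructor
    · rintro ⟨hb, hc⟩
      have h1z : s 1 ω = 0 := by
        funext i
        have := congrFun (hb.symm.trans hc) i
        simp only [Pi.neg_apply, Pi.zero_apply] at this ⊢
        linarith
      exact ⟨by rw [hb, h1z], h1z⟩
    · rintro ⟨ha, hb⟩
      exact ⟨by rw [ha, hb], by rw [ha, hb]; simp⟩
  have hABC : SA ∩ (SB ∪ SC) = SD := by
    ext ω
    simp only [hSA_def, hSB_def, hSC_def, hSD_def, Set.mem_inter_iff, Set.mem_union,
      Set.mem_setOf_eq]
    constructor
    · rintro ⟨ha, hb | hc⟩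
      · exact ⟨ha, hb.symm.trans ha⟩
      · refine ⟨ha, ?_⟩
        have := ha.symm.trans hc
        funext i
        have := congrFun this i
        simp only [Pi.neg_apply, Pi.zero_apply] at this ⊢
        linarith
    · rintro ⟨ha, hb⟩
      exact ⟨ha, Or.inl (by rw [ha, hb])⟩
  -- inclusion–exclusion
  have e1 : μ (SB ∪ SC) + μ SD = μ SB + μ SC := by
    rw [← hBC]; exact measure_union_add_inter SB hSCm
  have e2 : μ (SA ∪ (SB ∪ SC)) + μ SD = μ SA + μ (SB ∪ SC) := by
    rw [← hABC]; exact measure_union_add_inter SA (hSBm.union hSCm)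
  set U : Set Ω := SA ∪ (SB ∪ SC) with hU_def
  have hUm : MeasurableSet U := hSAm.union (hSBm.union hSCm)
  -- target set equals Uᶜ
  have hset : {ω | s 0 ω ∉ Submodule.span ℝ {s 1 ω}} = Uᶜ := by
    ext ω
    simp only [Set.mem_setOf_eq, Set.mem_compl_iff, hU_def, Set.mem_union, hSA_def, hSB_def,
      hSC_def, Set.mem_setOf_eq]
    rw [aux_span K _ _ (hval 0 ω) (hval 1 ω)]
    try tauto
  -- real-valued bookkeeping
  set x : ℝ := (1 - ε) ^ K + A' ^ K + B' ^ K - 2 * (1 - ε) ^ (2 * K) with hx_def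
  have hdlea : (1 - ε) ^ (2 * K) ≤ (1 - ε) ^ K := by
    apply pow_le_pow_of_le_one heb0 heb1
    omega
  have hdleb : (1 - ε) ^ (2 * K) ≤ A' ^ K := by
    rw [pow_mul]
    apply pow_le_pow_left₀ (by positivity)
    rw [hA'_def]
    nlinarith [sq_nonneg ε, sq_nonneg p1, sq_nonneg pm1]
  have hx0 : 0 ≤ x := by
    rw [hx_def]
    have : 0 ≤ B' ^ K := by positivity
    linarith
  have hU : μ U = ENNReal.ofReal x := by
    have hA2 : μ SA = ENNReal.ofReal ((1 - ε) ^ K) := by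
      rw [hA, ← ENNReal.ofReal_pow heb0]
    have hB2 : μ SB = ENNReal.ofReal (A' ^ K) := by
      rw [hB, ← ENNReal.ofReal_pow hA'0]
    have hC2 : μ SC = ENNReal.ofReal (B' ^ K) := by
      rw [hC, ← ENNReal.ofReal_pow hB'0]
    have hD2 : μ SD = ENNReal.ofReal ((1 - ε) ^ (2 * K)) := by
      rw [hD, ← ENNReal.ofReal_pow heb0]
    have e3 : μ U + (μ SD + μ SD) = μ SA + (μ SB + μ SC) := by
      calc μ U + (μ SD + μ SD) = (μ U + μ SD) + μ SD := by ring
        _ = (μ SA + μ (SB ∪ SC)) + μ SD := by rw [e2]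
        _ = μ SA + (μ (SB ∪ SC) + μ SD) := by ring
        _ = μ SA + (μ SB + μ SC) := by rw [e1]
    rw [hA2, hB2, hC2, hD2] at e3
    have e4 : ENNReal.ofReal x + (ENNReal.ofReal ((1 - ε) ^ (2 * K))
        + ENNReal.ofReal ((1 - ε) ^ (2 * K)))
        = ENNReal.ofReal ((1 - ε) ^ K) + (ENNReal.ofReal (A' ^ K) + ENNReal.ofReal (B' ^ K)) := by
      rw [← ENNReal.ofReal_add (by positivity) (by positivity),
        ← ENNReal.ofReal_add hx0 (by positivity),
        ← ENNReal.ofReal_add (by positivity) (by positivity),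
        ← ENNReal.ofReal_add (by positivity) (by positivity)]
      congr 1
      rw [hx_def]; ring
    exact WithTop.add_right_cancel
      (ENNReal.add_ne_top.2 ⟨ENNReal.ofReal_ne_top, ENNReal.ofReal_ne_top⟩) (e3.trans e4.symm)
  rw [hset, prob_compl_eq_one_sub hUm, hU]
  rw [← ENNReal.ofReal_one, ← ENNReal.ofReal_sub _ hx0]
  congr 1
  rw [hx_def, hA'_def, hB'_def]
  ring
end

section
/- Let ε ∈ [0, 1] with ε̄ = 1−ε, and let s₁ and s₂ be independent random vectors in {−2, −1, 0, 1, 2}² whose coordinates are i.i.d., each coordinate taking the value 0 with probability ε̄ and each of the four values −2, −1, 1, 2 with probability ε/4. Then the probability that s₁ does not belong to the ℝ-linear span of {s₂} in ℝ² equals 1 − ε̄² − 2(εε̄)² − 3ε⁴/16. -/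
set_option maxHeartbeats 4000000

open MeasureTheory ProbabilityTheory

def ival : Fin 5 → ℤ := ![-2, -1, 0, 1, 2]

noncomputable def rval : Fin 5 → ℝ := fun i => (ival i : ℝ)

def Cond (a b c d : Fin 5) : Prop :=
  ival a * ival d = ival b * ival c ∧ ((ival a = 0 ∧ ival b = 0) ∨ ¬(ival c = 0 ∧ ival d = 0))

instance : ∀ a b c d, Decidable (Cond a b c d) := fun _ _ _ _ => by unfold Cond; infer_instance

lemma rval_inj : Function.Injective rval := by
  intro i j h
  have h' : (ival i : ℝ) = ival j := h
  have : ival i = ival j := by exact_mod_cast h'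
  fin_cases i <;> fin_cases j <;> simp_all [ival]

lemma cond_iff (a b c d : Fin 5) :
    (rval a * rval d = rval b * rval c ∧
      ((rval a = 0 ∧ rval b = 0) ∨ ¬(rval c = 0 ∧ rval d = 0))) ↔ Cond a b c d := by
  unfold Cond rval
  norm_cast

lemma exists_idx {r : ℝ} (h : r ∈ ({-2, -1, 0, 1, 2} : Set ℝ)) : ∃ j : Fin 5, r = rval j := by
  simp only [Set.mem_insert_iff, Set.mem_singleton_iff] at h
  rcases h with h | h | h | h | h
  exacts [⟨0, by norm_num [rval, ival, h]⟩, ⟨1, by norm_num [rval, ival, h]⟩,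
    ⟨2, by simp [rval, ival, h]⟩, ⟨3, by simp [rval, ival, h]⟩,
    ⟨4, by simp [rval, ival, h]⟩]

lemma mem_span_iff (u v : Fin 2 → ℝ) :
    u ∈ Submodule.span ℝ {v} ↔
      (u 0 * v 1 = u 1 * v 0 ∧ ((u 0 = 0 ∧ u 1 = 0) ∨ ¬(v 0 = 0 ∧ v 1 = 0))) := by
  rw [Submodule.mem_span_singleton]
  constructor
  · rintro ⟨t, rfl⟩
    simp only [Pi.smul_apply, smul_eq_mul]
    constructor
    · ring
    · by_cases h : v 0 = 0 ∧ v 1 = 0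
      · exact Or.inl ⟨by rw [h.1]; ring, by rw [h.2]; ring⟩
      · exact Or.inr h
  · rintro ⟨h1, h2⟩
    by_cases hv0 : v 0 = 0
    · by_cases hv1 : v 1 = 0
      · rcases h2 with ⟨hu0, hu1⟩ | h
        · exact ⟨0, by funext i; fin_cases i <;> simp [hu0, hu1]⟩
        · exact absurd ⟨hv0, hv1⟩ h
      · refine ⟨u 1 / v 1, funext fun i => ?_⟩
        have hu0 : u 0 = 0 := by
          have := h1; rw [hv0, mul_zero] at this
          rcases mul_eq_zero.1 this with h | h
          · exact h
          · exact absurd h hv1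
        fin_cases i <;> simp [Pi.smul_apply, smul_eq_mul, hv0, hu0]
        field_simp
    · refine ⟨u 0 / v 0, funext fun i => ?_⟩
      fin_cases i <;> simp [Pi.smul_apply, smul_eq_mul]
      · field_simp
      · field_simp
        linarith [h1]

lemma sum_eval (ε : ℝ) (pr : Fin 5 → ℝ) (hpr : pr = ![ε/4, ε/4, 1-ε, ε/4, ε/4]) :
    ∑ x : Fin 5 × Fin 5 × Fin 5 × Fin 5,
      (if ¬ Cond x.1 x.2.1 x.2.2.1 x.2.2.2 then
        pr x.1 * pr x.2.1 * pr x.2.2.1 * pr x.2.2.2 else 0)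
    = 1 - (1 - ε) ^ 2 - 2 * (ε * (1 - ε)) ^ 2 - 3 * ε ^ 4 / 16 := by
  subst hpr
  simp only [Fintype.sum_prod_type, Fin.sum_univ_five]
  simp only [Cond, ival, Matrix.cons_val]
  norm_num
  ring

def Evt {Ω : Type*} (s : Fin 2 → Ω → (Fin 2 → ℝ)) (x : Fin 5 × Fin 5 × Fin 5 × Fin 5) :
    Set Ω :=
  {ω | s 0 ω 0 = rval x.1 ∧ s 0 ω 1 = rval x.2.1 ∧ s 1 ω 0 = rval x.2.2.1 ∧
    s 1 ω 1 = rval x.2.2.2}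

/-- Let `s₁, s₂` be independent random vectors in `{-2,-1,0,1,2}²` with i.i.d. coordinates,
each coordinate `0` w.p. `1-ε` and each of `-2, -1, 1, 2` w.p. `ε/4`. Then the probability
that `s₁ ∉ span ℝ {s₂}` equals `1 - (1-ε)² - 2(ε(1-ε))² - 3ε⁴/16`. -/
theorem stmt11 {Ω : Type*} [MeasurableSpace Ω] (μ : Measure Ω) [IsProbabilityMeasure μ]
    (ε : ℝ) (hε : ε ∈ Set.Icc (0 : ℝ) 1)
    (s : Fin 2 → Ω → (Fin 2 → ℝ))
    (hmeas : ∀ a, Measurable (s a))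
    (hindep : iIndepFun
      (fun (q : Fin 2 × Fin 2) (ω : Ω) => s q.1 ω q.2) μ)
    (hval : ∀ a ω i, s a ω i ∈ ({-2, -1, 0, 1, 2} : Set ℝ))
    (h0 : ∀ a i, μ {ω | s a ω i = 0} = ENNReal.ofReal (1 - ε))
    (hv : ∀ a i, ∀ v ∈ ({-2, -1, 1, 2} : Set ℝ),
      μ {ω | s a ω i = v} = ENNReal.ofReal (ε / 4)) :
    μ {ω | s 0 ω ∉ Submodule.span ℝ {s 1 ω}}
      = ENNReal.ofReal
          (1 - (1 - ε) ^ 2 - 2 * (ε * (1 - ε)) ^ 2 - 3 * ε ^ 4 / 16) := by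
  obtain ⟨hε0, hε1⟩ := hε
  set prR : Fin 5 → ℝ := ![ε/4, ε/4, 1-ε, ε/4, ε/4] with hprR
  have hnn : ∀ j : Fin 5, 0 ≤ prR j := by
    intro j; fin_cases j <;> simp [hprR] <;> linarith
  have hprob : ∀ a i (j : Fin 5), μ {ω | s a ω i = rval j} = ENNReal.ofReal (prR j) := by
    intro a i j
    fin_cases j
    · simpa [hprR, rval, ival] using hv a i (-2) (by norm_num)
    · simpa [hprR, rval, ival] using hv a i (-1) (by norm_num)
    · simpa [hprR, rval, ival] using h0 a i
    · simpa [hprR, rval, ival] using hv a i 1 (by norm_num)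
    · simpa [hprR, rval, ival] using hv a i 2 (by norm_num)
  -- the filter set
  set F : Finset (Fin 5 × Fin 5 × Fin 5 × Fin 5) :=
    Finset.univ.filter (fun x => ¬ Cond x.1 x.2.1 x.2.2.1 x.2.2.2) with hF
  -- cover
  have hcover : {ω | s 0 ω ∉ Submodule.span ℝ {s 1 ω}} = ⋃ x ∈ F, Evt s x := by
    ext ω
    simp only [Set.mem_setOf_eq, Set.mem_iUnion, hF, Finset.mem_filter, Finset.mem_univ,
      true_and, exists_prop]
    constructor
    · intro h
      obtain ⟨a, ha⟩ := exists_idx (hval 0 ω 0)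
      obtain ⟨b, hb⟩ := exists_idx (hval 0 ω 1)
      obtain ⟨c, hc⟩ := exists_idx (hval 1 ω 0)
      obtain ⟨d, hd⟩ := exists_idx (hval 1 ω 1)
      refine ⟨(a, b, c, d), ?_, ha, hb, hc, hd⟩
      intro hC
      apply h
      rw [mem_span_iff, ha, hb, hc, hd]
      exact (cond_iff a b c d).mpr hC
    · rintro ⟨⟨a, b, c, d⟩, hC, ha, hb, hc, hd⟩
      intro hmem
      rw [mem_span_iff, ha, hb, hc, hd] at hmem
      exact hC ((cond_iff a b c d).mp hmem)
  -- measurability of coordinate events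
  have hmc : ∀ (a : Fin 2) (i : Fin 2), Measurable (fun ω => s a ω i) :=
    fun a i => (measurable_pi_apply i).comp (hmeas a)
  have hmeasE : ∀ x, MeasurableSet (Evt s x) := by
    intro x
    exact (((hmc 0 0) (measurableSet_singleton _)).inter
      (((hmc 0 1) (measurableSet_singleton _)).inter
        (((hmc 1 0) (measurableSet_singleton _)).inter
          ((hmc 1 1) (measurableSet_singleton _)))))
  -- disjointness
  have hdisj : (F : Set (Fin 5 × Fin 5 × Fin 5 × Fin 5)).PairwiseDisjoint (Evt s) := by
    rintro ⟨a, b, c, d⟩ _ ⟨a', b', c', d'⟩ _ hne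
    rw [Function.onFun]
    rw [Set.disjoint_left]
    rintro ω ⟨h1, h2, h3, h4⟩ ⟨h1', h2', h3', h4'⟩
    apply hne
    have e1 : a = a' := rval_inj (h1.symm.trans h1')
    have e2 : b = b' := rval_inj (h2.symm.trans h2')
    have e3 : c = c' := rval_inj (h3.symm.trans h3')
    have e4 : d = d' := rval_inj (h4.symm.trans h4')
    simp [e1, e2, e3, e4]
  -- product formula
  have hmuE : ∀ x : Fin 5 × Fin 5 × Fin 5 × Fin 5,
      μ (Evt s x) = ENNReal.ofReal (prR x.1) * ENNReal.ofReal (prR x.2.1) *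
        ENNReal.ofReal (prR x.2.2.1) * ENNReal.ofReal (prR x.2.2.2) := by
    rintro ⟨a, b, c, d⟩
    have hEeq : Evt s (a, b, c, d) =
        ⋂ q : Fin 2 × Fin 2,
          (fun ω => s q.1 ω q.2) ⁻¹' {rval (![![a, b], ![c, d]] q.1 q.2)} := by
      ext ω
      simp only [Evt, Set.mem_setOf_eq, Set.mem_iInter, Set.mem_preimage,
        Set.mem_singleton_iff, Prod.forall, Fin.forall_fin_two]
      simp only [Matrix.cons_val', Matrix.cons_val_zero, Matrix.cons_val_one, Matrix.head_cons,
        Matrix.empty_val', Matrix.cons_val_fin_one, Matrix.head_fin_const]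
      tauto
    rw [hEeq, hindep.meas_iInter (fun q => ⟨{rval (![![a, b], ![c, d]] q.1 q.2)},
      measurableSet_singleton _, rfl⟩)]
    rw [Fintype.prod_prod_type]
    simp only [Fin.prod_univ_two]
    simp only [Matrix.cons_val', Matrix.cons_val_zero, Matrix.cons_val_one, Matrix.head_cons,
      Matrix.empty_val', Matrix.cons_val_fin_one, Matrix.head_fin_const]
    have hpre : ∀ (u : Fin 2) (i : Fin 2) (j : Fin 5),
        μ ((fun ω => s u ω i) ⁻¹' {rval j}) = ENNReal.ofReal (prR j) := by
      intro u i j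
      exact hprob u i j
    rw [hpre 0 0 a, hpre 0 1 b, hpre 1 0 c, hpre 1 1 d]
    ring
  rw [hcover, measure_biUnion_finset hdisj (fun x _ => hmeasE x)]
  simp_rw [hmuE]
  have hterm : ∀ x : Fin 5 × Fin 5 × Fin 5 × Fin 5,
      ENNReal.ofReal (prR x.1) * ENNReal.ofReal (prR x.2.1) * ENNReal.ofReal (prR x.2.2.1) *
        ENNReal.ofReal (prR x.2.2.2)
      = ENNReal.ofReal (prR x.1 * prR x.2.1 * prR x.2.2.1 * prR x.2.2.2) := by
    intro x
    rw [ENNReal.ofReal_mul (mul_nonneg (mul_nonneg (hnn _) (hnn _)) (hnn _)),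
      ENNReal.ofReal_mul (mul_nonneg (hnn _) (hnn _)), ENNReal.ofReal_mul (hnn _)]
  simp_rw [hterm]
  rw [← ENNReal.ofReal_sum_of_nonneg (fun x _ =>
    mul_nonneg (mul_nonneg (mul_nonneg (hnn _) (hnn _)) (hnn _)) (hnn _))]
  congr 1
  rw [hF, Finset.sum_filter]
  exact sum_eval ε prR hprR
end

section
/- Let n ≥ 2, K ≥ 1, and ν ∈ [0, 1] with ν̄ = 1−ν. Let s₁, …, sₙ be independent random vectors in {−1, 1}^K whose coordinates are i.i.d., each coordinate taking the value 1 with probability ν and −1 with probability ν̄. Then the probability of the event {for every j with 2 ≤ j ≤ n, s₁ ≠ sⱼ and s₁ ≠ −sⱼ} equals ∑_{k=0}^{K} C(K, k) · ν^k ν̄^{K−k} · (1 − ν^k ν̄^{K−k} − ν̄^k ν^{K−k})^{n−1}. -/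
open MeasureTheory ProbabilityTheory

section Aux

lemma aux_sum_card {K : ℕ} (g : ℕ → ℝ) :
    ∑ t : Finset (Fin K), g t.card
      = ∑ k ∈ Finset.range (K + 1), (K.choose k : ℝ) * g k := by
  rw [← Finset.powerset_univ, Finset.sum_powerset]
  simp only [Finset.card_univ, Fintype.card_fin]
  refine Finset.sum_congr rfl fun k _ => ?_
  rw [Finset.sum_congr rfl (fun t ht => by
    rw [(Finset.mem_powersetCard.1 ht).2]), Finset.sum_const, nsmul_eq_mul,
    Finset.card_powersetCard, Finset.card_univ, Fintype.card_fin]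

lemma aux_pq_le_one {ν : ℝ} (h0 : 0 ≤ ν) (h1 : ν ≤ 1) {K c : ℕ} (hK : 1 ≤ K) :
    ν ^ c * (1 - ν) ^ (K - c) + (1 - ν) ^ c * ν ^ (K - c) ≤ 1 := by
  have hb0 : (0:ℝ) ≤ 1 - ν := by linarith
  have hb1 : 1 - ν ≤ 1 := by linarith
  rcases Nat.eq_zero_or_pos c with rfl | hc
  · simp only [pow_zero, one_mul, mul_one, Nat.sub_zero]
    have := pow_le_of_le_one h0 h1 (by omega : K ≠ 0)
    have := pow_le_of_le_one hb0 hb1 (by omega : K ≠ 0)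
    linarith
  · have hp : ν ^ c * (1 - ν) ^ (K - c) ≤ ν * 1 :=
      mul_le_mul (pow_le_of_le_one h0 h1 (by omega)) (pow_le_one₀ hb0 hb1)
        (pow_nonneg hb0 _) h0
    have hq : (1 - ν) ^ c * ν ^ (K - c) ≤ (1 - ν) * 1 :=
      mul_le_mul (pow_le_of_le_one hb0 hb1 (by omega)) (pow_le_one₀ h0 h1)
        (pow_nonneg h0 _) hb0
    linarith

variable {Ω : Type*} [MeasurableSpace Ω] {μ : Measure Ω} {n K : ℕ}
  {s : Fin n → Ω → (Fin K → ℝ)}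

lemma aux_box
    (hindep : iIndepFun
      (fun (q : Fin n × Fin K) (ω : Ω) => s q.1 ω q.2) μ)
    (j : Fin n) (t : Fin K → Set ℝ) (ht : ∀ k, MeasurableSet (t k)) :
    μ (s j ⁻¹' Set.univ.pi t) = ∏ k : Fin K, μ {ω | s j ω k ∈ t k} := by
  have h := hindep.meas_biInter (S := {j} ×ˢ (Finset.univ : Finset (Fin K)))
      (s := fun q => {ω | s q.1 ω q.2 ∈ t q.2})
      (fun q _ => ⟨t q.2, ht q.2, rfl⟩)
  have hset : (⋂ q ∈ ({j} ×ˢ (Finset.univ : Finset (Fin K))), {ω | s q.1 ω q.2 ∈ t q.2})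
      = s j ⁻¹' Set.univ.pi t := by
    ext ω
    simp [Set.mem_pi, Finset.mem_product]
  rw [hset] at h
  rw [h, Finset.prod_product, Finset.prod_singleton]

lemma aux_master
    (hindep : iIndepFun
      (fun (q : Fin n × Fin K) (ω : Ω) => s q.1 ω q.2) μ)
    (S : Finset (Fin n)) (t : Fin n → Fin K → Set ℝ)
    (ht : ∀ j k, MeasurableSet (t j k)) :
    μ (⋂ j ∈ S, s j ⁻¹' Set.univ.pi (t j)) = ∏ j ∈ S, μ (s j ⁻¹' Set.univ.pi (t j)) := by
  have h := hindep.meas_biInter (S := S ×ˢ (Finset.univ : Finset (Fin K)))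
      (s := fun q => {ω | s q.1 ω q.2 ∈ t q.1 q.2})
      (fun q _ => ⟨t q.1 q.2, ht q.1 q.2, rfl⟩)
  have hset : (⋂ q ∈ (S ×ˢ (Finset.univ : Finset (Fin K))), {ω | s q.1 ω q.2 ∈ t q.1 q.2})
      = ⋂ j ∈ S, s j ⁻¹' Set.univ.pi (t j) := by
    ext ω
    simp only [Set.mem_iInter, Set.mem_setOf_eq, Finset.mem_product, Finset.mem_univ,
      and_true, Set.mem_preimage, Set.mem_pi, Set.mem_univ, true_implies, Prod.forall]
    exact ⟨fun h j hj k => h j k hj, fun h j k hj => h j hj k⟩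
  rw [hset] at h
  rw [h, Finset.prod_product]
  exact Finset.prod_congr rfl fun j _ => (aux_box hindep j (t j) (ht j)).symm

lemma aux_vec
    (hmeas : ∀ i, Measurable (s i))
    (hindep : iIndepFun
      (fun (q : Fin n × Fin K) (ω : Ω) => s q.1 ω q.2) μ) :
    iIndepFun s μ := by
  rw [iIndepFun_iff_iIndep]
  refine iIndepSets.iIndep (fun j => (hmeas j).comap_le)
    (fun j => (Set.preimage (s j)) ''
      (Set.pi Set.univ '' Set.pi Set.univ fun _ => {u : Set ℝ | MeasurableSet u}))
    (fun j => ?_) (fun j => ?_) ?_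
  · -- π-system
    have := (isPiSystem_pi
      (α := fun _ : Fin K => ℝ)).comap (s j)
    exact this
  · -- generateFrom
    rw [← generateFrom_pi, MeasurableSpace.comap_generateFrom]
  · -- iIndepSets
    rw [iIndepSets_iff]
    intro S f hf
    classical
    have hex : ∀ j : Fin n, ∃ t : Fin K → Set ℝ,
        (∀ k, MeasurableSet (t k)) ∧ (j ∈ S → s j ⁻¹' Set.univ.pi t = f j) := by
      intro j
      by_cases hj : j ∈ S
      · obtain ⟨B, ⟨t, ht, rfl⟩, hB⟩ := hf j hj
        exact ⟨t, fun k => ht k (Set.mem_univ k), fun _ => hB⟩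
      · exact ⟨fun _ => Set.univ, fun _ => MeasurableSet.univ, fun h => absurd h hj⟩
    choose t ht hft using hex
    have h1 : (⋂ j ∈ S, f j) = ⋂ j ∈ S, s j ⁻¹' Set.univ.pi (t j) :=
      Set.iInter₂_congr fun j hj => (hft j hj).symm
    rw [h1, aux_master hindep S t fun j k => ht j k]
    exact Finset.prod_congr rfl fun j hj => by rw [hft j hj]

/-- the sign vector of a subset -/
noncomputable def sv (K : ℕ) (t : Finset (Fin K)) : Fin K → ℝ :=
  fun k => if k ∈ t then 1 else -1

lemma sv_inj {K : ℕ} : Function.Injective (sv K) := by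
  intro t u h
  ext k
  by_contra hk
  have := congrFun h k
  simp only [sv] at this
  rcases Decidable.em (k ∈ t) with ht | ht <;> rcases Decidable.em (k ∈ u) with hu | hu <;>
    simp [ht, hu] at this hk <;> norm_num at this

lemma sv_neg {K : ℕ} (t : Finset (Fin K)) : -(sv K t) = sv K tᶜ := by
  funext k
  simp only [sv, Pi.neg_apply, Finset.mem_compl]
  by_cases hk : k ∈ t <;> simp [hk]

lemma aux_point
    {ν : ℝ} (hν0 : 0 ≤ ν) (hν1 : ν ≤ 1)
    (hindep : iIndepFun
      (fun (q : Fin n × Fin K) (ω : Ω) => s q.1 ω q.2) μ)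
    (h1 : ∀ i k, μ {ω | s i ω k = 1} = ENNReal.ofReal ν)
    (hm1 : ∀ i k, μ {ω | s i ω k = -1} = ENNReal.ofReal (1 - ν))
    (j : Fin n) (t : Finset (Fin K)) :
    μ (s j ⁻¹' {sv K t}) = ENNReal.ofReal (ν ^ t.card * (1 - ν) ^ (K - t.card)) := by
  classical
  have hset : s j ⁻¹' {sv K t} = s j ⁻¹' Set.univ.pi (fun k => {sv K t k}) := by
    ext ω
    simp [funext_iff, Set.mem_pi]
  rw [hset, aux_box hindep j _ (fun k => measurableSet_singleton _)]
  have hterm : ∀ k : Fin K, μ {ω | s j ω k ∈ ({sv K t k} : Set ℝ)}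
      = if k ∈ t then ENNReal.ofReal ν else ENNReal.ofReal (1 - ν) := by
    intro k
    by_cases hk : k ∈ t <;> simp only [sv, hk, if_true, if_false, Set.mem_singleton_iff]
    · exact h1 j k
    · exact hm1 j k
  rw [Finset.prod_congr rfl (fun k _ => hterm k), Finset.prod_ite]
  simp only [Finset.prod_const]
  have ha : Finset.filter (fun k => k ∈ t) Finset.univ = t := by ext k; simp
  have hb : (Finset.filter (fun k => ¬ k ∈ t) Finset.univ).card = K - t.card := by
    have h : Finset.filter (fun k => ¬ k ∈ t) Finset.univ = tᶜ := by
      ext k; simp [Finset.mem_compl]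
    rw [h, Finset.card_compl, Fintype.card_fin]
  rw [ha, hb, ← ENNReal.ofReal_pow hν0, ← ENNReal.ofReal_pow (by linarith),
    ← ENNReal.ofReal_mul (pow_nonneg hν0 _)]

lemma aux_notpair
    {ν : ℝ} (hν0 : 0 ≤ ν) (hν1 : ν ≤ 1) (hK : 1 ≤ K)
    [IsProbabilityMeasure μ]
    (hmeas : ∀ i, Measurable (s i))
    (hindep : iIndepFun
      (fun (q : Fin n × Fin K) (ω : Ω) => s q.1 ω q.2) μ)
    (h1 : ∀ i k, μ {ω | s i ω k = 1} = ENNReal.ofReal ν)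
    (hm1 : ∀ i k, μ {ω | s i ω k = -1} = ENNReal.ofReal (1 - ν))
    (j : Fin n) (t : Finset (Fin K)) :
    μ (s j ⁻¹' ({sv K t, -(sv K t)}ᶜ))
      = ENNReal.ofReal (1 - ν ^ t.card * (1 - ν) ^ (K - t.card)
          - (1 - ν) ^ t.card * ν ^ (K - t.card)) := by
  have hc : t.card ≤ K := by
    simpa using Finset.card_le_univ t
  have hab : sv K t ≠ -(sv K t) := by
    rw [sv_neg]
    intro h
    have h2 := sv_inj h
    obtain ⟨k⟩ := Fin.pos_iff_nonempty.1 (by omega : 0 < K)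
    by_cases hk : k ∈ t
    · exact (Finset.mem_compl.1 (h2 ▸ hk)) hk
    · exact hk (h2.symm ▸ Finset.mem_compl.2 hk)
  have hpair : MeasurableSet ({sv K t, -(sv K t)} : Set (Fin K → ℝ)) :=
    (measurableSet_singleton _).insert _
  have hsplit : μ (s j ⁻¹' ({sv K t, -(sv K t)}))
      = μ (s j ⁻¹' {sv K t}) + μ (s j ⁻¹' {-(sv K t)}) := by
    rw [show ({sv K t, -(sv K t)} : Set (Fin K → ℝ)) = {sv K t} ∪ {-(sv K t)} by rfl,
      Set.preimage_union]
    exact measure_union (Set.disjoint_left.2 (by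
      rintro ω h1' h2'
      exact hab ((Set.mem_preimage.1 h1').symm.trans (Set.mem_preimage.1 h2')))) 
      (hmeas j (measurableSet_singleton _))
  have hqval : μ (s j ⁻¹' {-(sv K t)})
      = ENNReal.ofReal ((1 - ν) ^ t.card * ν ^ (K - t.card)) := by
    rw [sv_neg, aux_point hν0 hν1 hindep h1 hm1 j tᶜ, Finset.card_compl,
      Fintype.card_fin, Nat.sub_sub_self hc, mul_comm]
  have hp0 : 0 ≤ ν ^ t.card * (1 - ν) ^ (K - t.card) :=
    mul_nonneg (pow_nonneg hν0 _) (pow_nonneg (by linarith) _)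
  have hq0 : 0 ≤ (1 - ν) ^ t.card * ν ^ (K - t.card) :=
    mul_nonneg (pow_nonneg (by linarith) _) (pow_nonneg hν0 _)
  rw [Set.preimage_compl, prob_compl_eq_one_sub (hmeas j hpair), hsplit,
    aux_point hν0 hν1 hindep h1 hm1 j t, hqval,
    ← ENNReal.ofReal_add hp0 hq0, ← ENNReal.ofReal_one,
    ← ENNReal.ofReal_sub _ (add_nonneg hp0 hq0)]
  ring_nf

end Aux


/-- Let `s₁, …, sₙ` be independent random vectors in `{-1,1}^K` whose `nK` coordinates are
independent, each equal to `1` w.p. `ν` and `-1` w.p. `1-ν`. Then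
`P(∀ j ≥ 2, s₁ ≠ sⱼ ∧ s₁ ≠ -sⱼ)
  = ∑_{k=0}^{K} C(K,k) ν^k (1-ν)^{K-k} (1 - ν^k (1-ν)^{K-k} - (1-ν)^k ν^{K-k})^{n-1}`. -/
theorem stmt15 {Ω : Type*} [MeasurableSpace Ω] (μ : Measure Ω) [IsProbabilityMeasure μ]
    (n : ℕ) (hn : 2 ≤ n) (K : ℕ) (hK : 1 ≤ K)
    (ν : ℝ) (hν : ν ∈ Set.Icc (0 : ℝ) 1)
    (s : Fin n → Ω → (Fin K → ℝ))
    (hmeas : ∀ i, Measurable (s i))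
    (hindep : iIndepFun
      (fun (q : Fin n × Fin K) (ω : Ω) => s q.1 ω q.2) μ)
    (hval : ∀ i ω k, s i ω k = 1 ∨ s i ω k = -1)
    (h1 : ∀ i k, μ {ω | s i ω k = 1} = ENNReal.ofReal ν)
    (hm1 : ∀ i k, μ {ω | s i ω k = -1} = ENNReal.ofReal (1 - ν)) :
    μ {ω | ∀ j : Fin n, j ≠ ⟨0, by omega⟩ →
        s ⟨0, by omega⟩ ω ≠ s j ω ∧ s ⟨0, by omega⟩ ω ≠ -(s j ω)}
      = ENNReal.ofReal
          (∑ k ∈ Finset.range (K + 1),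
            (K.choose k : ℝ) * ν ^ k * (1 - ν) ^ (K - k) *
              (1 - ν ^ k * (1 - ν) ^ (K - k) - (1 - ν) ^ k * ν ^ (K - k)) ^ (n - 1)) := by
  classical
  obtain ⟨hν0, hν1⟩ := hν
  set i0 : Fin n := ⟨0, by omega⟩ with hi0
  set W : Finset (Fin K) → Fin n → Set (Fin K → ℝ) := fun t j =>
    if j = i0 then {sv K t} else ({sv K t, -(sv K t)}ᶜ) with hWdef
  have hWmeas : ∀ t j, MeasurableSet (W t j) := by
    intro t j
    by_cases hj : j = i0
    · simp only [hWdef, if_pos hj]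
      exact measurableSet_singleton _
    · simp only [hWdef, if_neg hj]
      exact ((measurableSet_singleton _).insert _).compl
  -- event decomposition
  have hE : {ω | ∀ j : Fin n, j ≠ i0 → s i0 ω ≠ s j ω ∧ s i0 ω ≠ -(s j ω)}
      = ⋃ t : Finset (Fin K), ⋂ j, s j ⁻¹' W t j := by
    ext ω
    simp only [Set.mem_setOf_eq, Set.mem_iUnion, Set.mem_iInter, Set.mem_preimage]
    constructor
    · intro hω
      refine ⟨Finset.univ.filter (fun k => s i0 ω k = 1), fun j => ?_⟩
      have hs0 : s i0 ω = sv K (Finset.univ.filter (fun k => s i0 ω k = 1)) := by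
        funext k
        rcases hval i0 ω k with h | h <;> simp [sv, h] <;> norm_num
      by_cases hj : j = i0
      · subst hj
        simp only [hWdef, if_pos rfl, Set.mem_singleton_iff]
        exact hs0
      · simp only [hWdef, if_neg hj, Set.mem_compl_iff, Set.mem_insert_iff,
          Set.mem_singleton_iff]
        obtain ⟨ha, hb⟩ := hω j hj
        push_neg
        refine ⟨fun h => ha (by rw [hs0, h]), fun h => hb ?_⟩
        rw [hs0, h, neg_neg]
    · rintro ⟨t, ht⟩ j hj
      have h0 : s i0 ω = sv K t := by
        have := ht i0
        simpa only [hWdef, if_pos rfl, Set.mem_singleton_iff] using this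
      have hjW := ht j
      simp only [hWdef, if_neg hj, Set.mem_compl_iff, Set.mem_insert_iff,
        Set.mem_singleton_iff, not_or] at hjW
      refine ⟨fun h => hjW.1 (by rw [← h, h0]), fun h => hjW.2 ?_⟩
      rw [← neg_neg (s j ω), ← h, h0]
  have hdisj : Pairwise (Function.onFun Disjoint
      (fun t : Finset (Fin K) => ⋂ j, s j ⁻¹' W t j)) := by
    intro t u htu
    refine Set.disjoint_left.2 fun ω hωt hωu => htu (sv_inj ?_)
    have h1' := Set.mem_iInter.1 hωt i0
    have h2' := Set.mem_iInter.1 hωu i0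
    simp only [hWdef, if_pos rfl, Set.mem_preimage, Set.mem_singleton_iff] at h1' h2'
    rw [← h1', ← h2']
  have hmeasSets : ∀ t : Finset (Fin K), MeasurableSet (⋂ j, s j ⁻¹' W t j) :=
    fun t => MeasurableSet.iInter fun j => hmeas j (hWmeas t j)
  rw [hE, measure_iUnion hdisj hmeasSets, tsum_fintype]
  -- per-piece value
  have hterm : ∀ t : Finset (Fin K), μ (⋂ j, s j ⁻¹' W t j)
      = ENNReal.ofReal ((ν ^ t.card * (1 - ν) ^ (K - t.card)) *
          (1 - ν ^ t.card * (1 - ν) ^ (K - t.card)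
            - (1 - ν) ^ t.card * ν ^ (K - t.card)) ^ (n - 1)) := by
    intro t
    rw [(aux_vec hmeas hindep).meas_iInter (fun j => ⟨W t j, hWmeas t j, rfl⟩)]
    rw [← Finset.mul_prod_erase Finset.univ _ (Finset.mem_univ i0)]
    have h2 : ∀ j ∈ Finset.univ.erase i0, μ (s j ⁻¹' W t j)
        = ENNReal.ofReal (1 - ν ^ t.card * (1 - ν) ^ (K - t.card)
            - (1 - ν) ^ t.card * ν ^ (K - t.card)) := by
      intro j hj
      rw [show W t j = ({sv K t, -(sv K t)}ᶜ) from if_neg (Finset.mem_erase.1 hj).1]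
      exact aux_notpair hν0 hν1 hK hmeas hindep h1 hm1 j t
    rw [Finset.prod_congr rfl h2, Finset.prod_const,
      Finset.card_erase_of_mem (Finset.mem_univ _), Finset.card_univ, Fintype.card_fin,
      show W t i0 = {sv K t} from if_pos rfl, aux_point hν0 hν1 hindep h1 hm1 i0 t]
    have hpq := aux_pq_le_one hν0 hν1 (c := t.card) hK
    have hp0 : 0 ≤ ν ^ t.card * (1 - ν) ^ (K - t.card) :=
      mul_nonneg (pow_nonneg hν0 _) (pow_nonneg (by linarith) _)
    have hq0 : 0 ≤ (1 - ν) ^ t.card * ν ^ (K - t.card) :=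
      mul_nonneg (pow_nonneg (by linarith) _) (pow_nonneg hν0 _)
    rw [← ENNReal.ofReal_pow (by linarith), ← ENNReal.ofReal_mul hp0]
  rw [Finset.sum_congr rfl (fun t _ => hterm t),
    ← ENNReal.ofReal_sum_of_nonneg (fun t _ => by
      have hpq := aux_pq_le_one hν0 hν1 (c := t.card) hK
      have hp0 : 0 ≤ ν ^ t.card * (1 - ν) ^ (K - t.card) :=
        mul_nonneg (pow_nonneg hν0 _) (pow_nonneg (by linarith) _)
      exact mul_nonneg hp0 (pow_nonneg (by linarith) _))]
  congr 1
  rw [aux_sum_card (fun c => (ν ^ c * (1 - ν) ^ (K - c)) *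
      (1 - ν ^ c * (1 - ν) ^ (K - c) - (1 - ν) ^ c * ν ^ (K - c)) ^ (n - 1))]
  exact Finset.sum_congr rfl fun k _ => by ring
end
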